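/- arXiv:1306.5469 — 3 statements merged into one kernel-verified Lean document; each statement's English description precedes it below -/
import Mathlib

section
/- For all constants 0 < c₀ ≤ C₀ there exists a constant c > 0 (depending only on c₀ and C₀) such that the following holds. Let a, x, y ∈ ℝ² with x ≠ y and c₀ ≤ |a−x| ≤ C₀, c₀ ≤ |a−y| ≤ C₀. Then |P_a(x) − P_a(y)| ≥ c · |x−y| · dist(a, ℓ_{x,y}), where |P_a(x) − P_a(y)| denotes the arc-length of the shorter arc of S¹ with endpoints P_a(x) and P_a(y), and ℓ_{x,y} is the line through x and y. -/
open MeasureTheory Metric Set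

/-- The radial projection from the vantage point `a`: `P_a(x) = (x - a)/|x - a|`. -/
noncomputable def radialProj (a x : ℂ) : ℂ := ‖x - a‖⁻¹ • (x - a)

/-- The line through two points `x` and `y`. -/
noncomputable def lineThrough (x y : ℂ) : Set ℂ := {z : ℂ | ∃ t : ℝ, z = x + t • (y - x)}

/-- The arc-length of the shorter arc of the unit circle between the unit vectors
`u` and `v`, i.e. the angle `arccos ⟨u, v⟩`. -/
noncomputable def arcDist (u v : ℂ) : ℝ := Real.arccos (u.re * v.re + u.im * v.im)

/-! Both `|x - y| · dist(a, ℓ_{x,y})` and `|a - x| |a - y| sin θ`, where `θ` is the angle at `a`,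
are twice the area of the triangle `axy`. Since `θ` is exactly the arc distance between `P_a(x)` and
`P_a(y)`, the bound follows from `sin θ ≤ θ` and `|a - x| |a - y| ≤ C₀²`. -/

open InnerProductGeometry RealInnerProductSpace

/-- This holds without assuming `x ≠ a ≠ y`: both sides then take the junk value `arccos 0`. -/
theorem arcDist_radialProj (a x y : ℂ) :
    arcDist (radialProj a x) (radialProj a y) = angle (x - a) (y - a) := by
  unfold arcDist radialProj angle
  simp only [Complex.inner, Complex.real_smul, Complex.mul_re, Complex.ofReal_re,
    Complex.ofReal_im, Complex.conj_re, Complex.conj_im, Complex.mul_im, zero_mul, sub_zero]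
  congr 1
  field_simp
  ring

theorem exists_norm_sub_mul_norm_add_smul_eq_sin_angle_mul {V : Type*} [NormedAddCommGroup V]
    [InnerProductSpace ℝ V] (u v : V) (huv : u ≠ v) :
    ∃ t : ℝ, ‖v - u‖ * ‖u + t • (v - u)‖ = Real.sin (angle u v) * (‖u‖ * ‖v‖) := by
  set w := v - u
  have hw : ⟪w, w⟫ ≠ 0 := inner_self_ne_zero.2 (sub_ne_zero.2 huv.symm)
  -- `u + t • w` is the foot of the perpendicular from `0`; both sides are then Gram determinants.
  refine ⟨-(⟪u, w⟫ / ⟪w, w⟫), ?_⟩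
  rw [sin_angle_mul_norm_mul_norm, ← Real.sqrt_sq (by positivity : (0:ℝ) ≤ ‖w‖ * _)]
  congr 1
  have hv : v = u + w := by simp [w]
  rw [mul_pow, ← real_inner_self_eq_norm_sq, ← real_inner_self_eq_norm_sq, hv]
  simp only [inner_add_left, inner_add_right, real_inner_smul_left, real_inner_smul_right,
    real_inner_comm u w]
  field_simp
  ring

theorem dist_mul_infDist_lineThrough_le (a x y : ℂ) (hxy : x ≠ y) :
    dist x y * infDist a (lineThrough x y) ≤ dist a x * dist a y * angle (x - a) (y - a) := by
  obtain ⟨t, ht⟩ := exists_norm_sub_mul_norm_add_smul_eq_sin_angle_mul (x - a) (y - a)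
    (sub_left_injective.ne hxy)
  rw [sub_sub_sub_cancel_right] at ht
  have hfoot : infDist a (lineThrough x y) ≤ ‖x - a + t • (y - x)‖ := by
    rw [← add_sub_right_comm, ← dist_eq_norm, dist_comm]
    exact infDist_le_dist_of_mem ⟨t, rfl⟩
  calc dist x y * infDist a (lineThrough x y)
      ≤ ‖y - x‖ * ‖x - a + t • (y - x)‖ := by
        rw [← dist_eq_norm, dist_comm]
        gcongr
    _ = Real.sin (angle (x - a) (y - a)) * (dist a x * dist a y) := by
        rw [ht, dist_comm a x, dist_comm a y, dist_eq_norm, dist_eq_norm]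
    _ ≤ dist a x * dist a y * angle (x - a) (y - a) := by
        rw [mul_comm]
        gcongr
        exact Real.sin_le (angle_nonneg _ _)

theorem stmt5_general (c₀ C₀ : ℝ) :
    ∃ c : ℝ, 0 < c ∧ ∀ a x y : ℂ, x ≠ y →
      c₀ ≤ dist a x → dist a x ≤ C₀ → c₀ ≤ dist a y → dist a y ≤ C₀ →
      c * (dist x y * Metric.infDist a (lineThrough x y)) ≤
        arcDist (radialProj a x) (radialProj a y) := by
  refine ⟨(1 + C₀ ^ 2)⁻¹, by positivity, fun a x y hxy _ hx _ hy => ?_⟩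
  have hprod : dist a x * dist a y ≤ 1 + C₀ ^ 2 := by
    nlinarith [dist_nonneg (x := a) (y := x), dist_nonneg (x := a) (y := y)]
  rw [arcDist_radialProj, inv_mul_le_iff₀ (by positivity)]
  calc dist x y * infDist a (lineThrough x y)
      ≤ dist a x * dist a y * angle (x - a) (y - a) := dist_mul_infDist_lineThrough_le a x y hxy
    _ ≤ (1 + C₀ ^ 2) * angle (x - a) (y - a) := by gcongr; exact angle_nonneg _ _

/-- Geometric lemma: if `|a - x|` and `|a - y|` are comparable to `1`, then
`|P_a(x) - P_a(y)| ≳ |x - y| · dist(a, ℓ_{x,y})`. -/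
theorem stmt5 (c₀ C₀ : ℝ) (hc₀ : 0 < c₀) (hc₀C₀ : c₀ ≤ C₀) :
    ∃ c : ℝ, 0 < c ∧ ∀ a x y : ℂ, x ≠ y →
      c₀ ≤ dist a x → dist a x ≤ C₀ → c₀ ≤ dist a y → dist a y ≤ C₀ →
      c * (dist x y * Metric.infDist a (lineThrough x y)) ≤
        arcDist (radialProj a x) (radialProj a y) :=
  stmt5_general c₀ C₀
end

section
/- Fix d ≥ 1 and an absolute constant c ≥ 1, and let 𝓛_δ be the δ-discretized family of lines meeting B(0,d): the lines with direction angle k₁δ (k₁ ∈ ℤ ∩ [0, πδ^{−1}]) at distance k₂δ from the origin (k₂ ∈ ℤ ∩ [0, dδ^{−1}]); note |𝓛_δ| ∼ δ^{−2}. Let A ⊆ [0,1]² be a discrete (α,C₀,δ)-set that is unconcentrated on lines, and define f_δ(ℓ) := #(A ∩ ℓ^{cδ}) for ℓ ∈ 𝓛_δ. Then there exist constants C, M > 0 depending only on c, d, α, C₀ (not on δ) such that (1/|𝓛_δ|) Σ_{ℓ ∈ 𝓛_δ} f_δ(ℓ)² ≤ C |log δ|^M δ^{1−α}. -/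
open MeasureTheory Metric Set

/-- A line in the plane. -/
def IsLine (ℓ : Set ℂ) : Prop := ∃ p v : ℂ, v ≠ 0 ∧ ℓ = {w : ℂ | ∃ t : ℝ, w = p + t • v}

/-- The closed unit square `[0,1]²`. -/
def unitSq : Set ℂ := {w : ℂ | w.re ∈ Icc (0:ℝ) 1 ∧ w.im ∈ Icc (0:ℝ) 1}

/-- A discrete `(α, C, δ)`-set that is unconcentrated on lines. -/
def DiscUnconc (α C δ : ℝ) (A : Set ℂ) : Prop :=
  A.Finite ∧
  (∀ x ∈ A, ∀ y ∈ A, x ≠ y → δ ≤ dist x y) ∧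
  C⁻¹ * δ ^ (-α) ≤ (A.ncard : ℝ) ∧
  (A.ncard : ℝ) ≤ C * δ ^ (-α) ∧
  (∀ (x : ℂ) (r : ℝ), δ ≤ r →
      ((A ∩ closedBall x r).ncard : ℝ) ≤ C * r ^ α * (A.ncard : ℝ)) ∧
  (∀ ℓ : Set ℂ, IsLine ℓ →
      ((A ∩ cthickening C⁻¹ ℓ).ncard : ℝ) ≤ (A.ncard : ℝ) / 10)

/-- The unit direction vector with angle `k₁ δ`. -/
noncomputable def dDir (δ : ℝ) (k : ℤ × ℤ) : ℂ := Complex.exp (((k.1 : ℝ) * δ) * Complex.I)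

/-- The line with direction angle `k₁ δ` at distance `k₂ δ` from the origin. -/
noncomputable def dline (δ : ℝ) (k : ℤ × ℤ) : Set ℂ :=
  {z : ℂ | ∃ t : ℝ, z = (((k.2 : ℝ) * δ : ℝ) : ℂ) * (Complex.I * dDir δ k) + (t : ℂ) * dDir δ k}

/-- The index set of the `δ`-discretized family of lines meeting `B(0,d)`:
`k₁ ∈ ℤ ∩ [0, π δ⁻¹]`, `k₂ ∈ ℤ ∩ [0, d δ⁻¹]`. -/
noncomputable def LIdx (d δ : ℝ) : Finset (ℤ × ℤ) :=
  Finset.Icc 0 ⌊Real.pi / δ⌋ ×ˢ Finset.Icc 0 ⌊d / δ⌋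

/-!
Expanding the square, `∑ₗ f_δ(ℓ)²` counts the triples `(x, y, ℓ)` with `x, y ∈ A ∩ ℓ^{cδ}`. For
two points at distance `r`, at most `2c + 1` tubes of a given direction contain `x`, and a
direction `θ` is possible only if `r |sin (arg (x - y) - θ)| ≤ 2cδ`, which by Jordan's inequality
leaves `≲ 1 + c/r` of the `≈ π/δ` directions; so `x, y` share `≲ c² / max(r, cδ)` tubes. Summing
`1 / max(|x - y|, 2cδ)` over `y ∈ A` dyadically, the Frostman condition bounds each of the
`≲ |log δ|` scales by `2 C₀ #A δ^{α-1}`. With `#A ≤ C₀ δ^{-α}` and `|𝓛_δ| ≥ δ^{-2}` this is the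
claim. A line through a point of `A` shows `#A ≥ 10`, so the unit square forces `δ² ≤ 1/2`, and
then `1 ≲ |log δ|` also absorbs the `+1` in the number of scales.
-/

open ComplexConjugate Real
open scoped Finset

lemma card_le_of_forall_mul_mem_Icc {β a b : ℝ} (hβ : 0 < β) (hab : a ≤ b) {S : Finset ℤ}
    (hS : ∀ m ∈ S, (m : ℝ) * β ∈ Icc a b) : (#S : ℝ) ≤ (b - a) / β + 1 := by
  have hsub : S ⊆ Finset.Icc ⌈a / β⌉ ⌊b / β⌋ := fun m hm => by
    obtain ⟨h₁, h₂⟩ := hS m hm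
    exact Finset.mem_Icc.2 ⟨Int.ceil_le.2 ((div_le_iff₀ hβ).2 h₁),
      Int.le_floor.2 ((le_div_iff₀ hβ).2 h₂)⟩
  have hcard : ((Finset.Icc ⌈a / β⌉ ⌊b / β⌋).card : ℝ) ≤ ⌊b / β⌋ + 1 - ⌈a / β⌉ := by
    have h₀ : 0 ≤ ⌊b / β⌋ + 1 - ⌈a / β⌉ := by
      have := (Int.ceil_mono (div_le_div_of_nonneg_right hab hβ.le)).trans
        (Int.ceil_le_floor_add_one (b / β))
      omega
    rw [Int.card_Icc, ← Int.cast_natCast, Int.toNat_of_nonneg h₀]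
    push_cast; rfl
  calc (#S : ℝ) ≤ #(Finset.Icc ⌈a / β⌉ ⌊b / β⌋) := by exact_mod_cast Finset.card_le_card hsub
    _ ≤ ⌊b / β⌋ + 1 - ⌈a / β⌉ := hcard
    _ ≤ (b - a) / β + 1 := by
      rw [sub_div]; linarith [Int.floor_le (b / β), Int.le_ceil (a / β)]

lemma exists_int_abs_sub_mul_pi_le {u s : ℝ} (h : |sin u| ≤ s) :
    ∃ m : ℤ, |u - m * π| ≤ π / 2 ∧ |u - m * π| ≤ π / 2 * s := by
  set m := round (u / π)
  have hm : |u - m * π| ≤ π / 2 := calc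
    |u - m * π| = |u / π - m| * π := by
      rw [← abs_of_pos pi_pos, ← abs_mul, abs_of_pos pi_pos, sub_mul, div_mul_cancel₀ _ pi_ne_zero]
    _ ≤ 1 / 2 * π := by gcongr; exact abs_sub_round _
    _ = π / 2 := by ring
  refine ⟨m, hm, ?_⟩
  have hjordan := mul_abs_le_abs_sin hm
  rw [sin_sub_int_mul_pi, abs_mul, abs_neg_one_zpow, one_mul] at hjordan
  calc |u - m * π| = π / 2 * (2 / π * |u - m * π|) := by field_simp
    _ ≤ π / 2 * s := by gcongr; exact hjordan.trans h

lemma int_mul_le_of_le_floor_div {δ t : ℝ} (hδ : 0 < δ) {a : ℤ} (ha : a ≤ ⌊t / δ⌋) :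
    (a : ℝ) * δ ≤ t :=
  (le_div_iff₀ hδ).1 ((Int.cast_le.2 ha).trans (Int.floor_le _))

lemma card_Icc_zero_floor_div_le {δ t : ℝ} (hδ : 0 < δ) (ht : 0 ≤ t) :
    (#(Finset.Icc 0 ⌊t / δ⌋) : ℝ) ≤ t / δ + 1 := by
  simpa using card_le_of_forall_mul_mem_Icc hδ ht fun a ha =>
    ⟨mul_nonneg (Int.cast_nonneg (Finset.mem_Icc.1 ha).1) hδ.le,
      int_mul_le_of_le_floor_div hδ (Finset.mem_Icc.1 ha).2⟩

lemma card_filter_abs_sin_le {δ s ψ : ℝ} (hδ : 0 < δ) (hs : 0 ≤ s) (hψ : ψ ∈ Ioc (-π) π) :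
    (#{a ∈ Finset.Icc 0 ⌊π / δ⌋ | |sin (ψ - ((a : ℤ) : ℝ) * δ)| ≤ s} : ℝ) ≤
      4 * (π * s / δ + 1) := by
  set W : ℤ → Finset ℤ := fun m =>
    {a ∈ Finset.Icc 0 ⌊π / δ⌋ | (a : ℝ) * δ ∈ Icc (ψ - m * π - π / 2 * s) (ψ - m * π + π / 2 * s)}
  -- Jordan's inequality puts each such `aδ ∈ [0, π]` within `πs/2` of `ψ - mπ`, `m ∈ [-2, 1]`.
  have hsub : {a ∈ Finset.Icc 0 ⌊π / δ⌋ | |sin (ψ - ((a : ℤ) : ℝ) * δ)| ≤ s} ⊆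
      (Finset.Icc (-2 : ℤ) 1).biUnion W := by
    intro a ha
    obtain ⟨haI, hsin⟩ := Finset.mem_filter.1 ha
    have ha0 : (0 : ℝ) ≤ a * δ := mul_nonneg (Int.cast_nonneg (Finset.mem_Icc.1 haI).1) hδ.le
    have haπ : (a : ℝ) * δ ≤ π := int_mul_le_of_le_floor_div hδ (Finset.mem_Icc.1 haI).2
    obtain ⟨m, hm₁, hm₂⟩ := exists_int_abs_sub_mul_pi_le hsin
    rw [abs_le] at hm₁ hm₂
    have hm_lo : -3 < m := by
      by_contra! hm
      have : (m : ℝ) ≤ -3 := by exact_mod_cast hm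
      nlinarith [pi_pos, hψ.1]
    have hm_hi : m < 2 := by
      by_contra! hm
      have : (2 : ℝ) ≤ m := by exact_mod_cast hm
      nlinarith [pi_pos, hψ.2]
    exact Finset.mem_biUnion.2 ⟨m, Finset.mem_Icc.2 ⟨by omega, by omega⟩,
      Finset.mem_filter.2 ⟨haI, by constructor <;> linarith⟩⟩
  have hW : ∀ m, (#(W m) : ℝ) ≤ π * s / δ + 1 := fun m => by
    have := card_le_of_forall_mul_mem_Icc hδ (by nlinarith [pi_pos]) (S := W m)
      fun a ha => (Finset.mem_filter.1 ha).2
    convert this using 2; ring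
  calc (#{a ∈ Finset.Icc 0 ⌊π / δ⌋ | |sin (ψ - ((a : ℤ) : ℝ) * δ)| ≤ s} : ℝ)
      ≤ #((Finset.Icc (-2 : ℤ) 1).biUnion W) := by exact_mod_cast Finset.card_le_card hsub
    _ ≤ ∑ m ∈ Finset.Icc (-2 : ℤ) 1, (#(W m) : ℝ) := by exact_mod_cast Finset.card_biUnion_le
    _ ≤ ∑ m ∈ Finset.Icc (-2 : ℤ) 1, (π * s / δ + 1) := Finset.sum_le_sum fun m _ => hW m
    _ = 4 * (π * s / δ + 1) := by
        rw [Finset.sum_const, show #(Finset.Icc (-2 : ℤ) 1) = 4 from rfl, nsmul_eq_mul]; norm_num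

lemma mul_conj_of_norm_eq_one {e : ℂ} (he : ‖e‖ = 1) : e * conj e = 1 := by
  rw [Complex.mul_conj, Complex.normSq_eq_norm_sq, he]; norm_num

lemma setOf_exists_eq_add_mul_eq_setOf_im_mul_conj {e : ℂ} (he : ‖e‖ = 1) (p : ℝ) :
    {z : ℂ | ∃ t : ℝ, z = (p : ℂ) * (Complex.I * e) + t * e} = {z | (z * conj e).im = p} := by
  have he' := mul_conj_of_norm_eq_one he
  ext z
  constructor
  · rintro ⟨t, rfl⟩
    have : ((p : ℂ) * (Complex.I * e) + t * e) * conj e = t + p * Complex.I := by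
      linear_combination (t + p * Complex.I) * he'
    simp only [mem_ofPred_eq, this, Complex.add_im, Complex.ofReal_im, Complex.im_ofReal_mul,
      Complex.I_im]
    ring
  · intro hz
    refine ⟨(z * conj e).re, ?_⟩
    have hrot : z * conj e = (z * conj e).re + p * Complex.I := by
      rw [← hz]; exact (Complex.re_add_im _).symm
    linear_combination e * hrot - z * he'

lemma mem_cthickening_setOf_im_mul_conj_iff {e : ℂ} (he : ‖e‖ = 1) (p : ℝ) {ρ : ℝ}
    (hρ : 0 ≤ ρ) (w : ℂ) :
    w ∈ cthickening ρ {z : ℂ | (z * conj e).im = p} ↔ |(w * conj e).im - p| ≤ ρ := by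
  constructor
  · intro hw
    rw [mem_cthickening_iff] at hw
    refine (ENNReal.ofReal_le_ofReal_iff hρ).1 (le_trans ?_ hw)
    refine le_infEDist.2 fun z (hz : (z * conj e).im = p) => ?_
    rw [edist_dist]
    refine ENNReal.ofReal_le_ofReal ?_
    calc |(w * conj e).im - p| = |((w - z) * conj e).im| := by rw [sub_mul, Complex.sub_im, hz]
      _ ≤ ‖(w - z) * conj e‖ := Complex.abs_im_le_norm _
      _ = dist w z := by rw [norm_mul, Complex.norm_conj, he, mul_one, dist_eq_norm]
  · intro hw
    set h := (w * conj e).im - p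
    refine mem_cthickening_of_dist_le w (w - h * (Complex.I * e)) ρ _ ?_ ?_
    · show ((w - h * (Complex.I * e)) * conj e).im = p
      have : (w - h * (Complex.I * e)) * conj e = w * conj e - h * Complex.I := by
        linear_combination (-(h:ℂ) * Complex.I) * mul_conj_of_norm_eq_one he
      rw [this]; simp [h]
    · simpa [dist_eq_norm, he] using hw

lemma norm_dDir (δ : ℝ) (k : ℤ × ℤ) : ‖dDir δ k‖ = 1 := by
  simp [dDir, Complex.norm_exp]

lemma mem_cthickening_dline_iff (δ : ℝ) (k : ℤ × ℤ) {ρ : ℝ} (hρ : 0 ≤ ρ) (w : ℂ) :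
    w ∈ cthickening ρ (dline δ k) ↔ |(w * conj (dDir δ k)).im - k.2 * δ| ≤ ρ := by
  rw [dline, setOf_exists_eq_add_mul_eq_setOf_im_mul_conj (norm_dDir δ k),
    mem_cthickening_setOf_im_mul_conj_iff (norm_dDir δ k) _ hρ]

lemma im_mul_conj_exp (z : ℂ) (θ : ℝ) :
    (z * conj (Complex.exp (θ * Complex.I))).im = ‖z‖ * sin (Complex.arg z - θ) := by
  conv_lhs => rw [← Complex.norm_mul_exp_arg_mul_I z]
  rw [← Complex.exp_conj, map_mul, Complex.conj_ofReal, Complex.conj_I, mul_assoc,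
    ← Complex.exp_add]
  have : (Complex.arg z : ℂ) * Complex.I + θ * -Complex.I =
      ((Complex.arg z - θ : ℝ) : ℂ) * Complex.I := by
    push_cast; ring
  rw [this, Complex.im_ofReal_mul, Complex.exp_ofReal_mul_I_im]

lemma dDir_eq_exp (δ : ℝ) (k : ℤ × ℤ) :
    dDir δ k = Complex.exp (((k.1 * δ : ℝ) : ℂ) * Complex.I) := by
  rw [dDir]; push_cast; rfl

lemma card_le_of_forall_mem_cthickening_dline {δ ρ : ℝ} (hδ : 0 < δ) (hρ : 0 ≤ ρ) {x : ℂ}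
    {a : ℤ} {F : Finset (ℤ × ℤ)} (hF : ∀ k ∈ F, k.1 = a ∧ x ∈ cthickening ρ (dline δ k)) :
    (#F : ℝ) ≤ 2 * ρ / δ + 1 := by
  set p := (x * conj (dDir δ (a, 0))).im
  rw [← Finset.card_image_of_injOn fun k hk k' hk' h =>
    Prod.ext ((hF k hk).1.trans (hF k' hk').1.symm) h]
  have := card_le_of_forall_mul_mem_Icc hδ (by linarith : p - ρ ≤ p + ρ)
    (S := F.image Prod.snd) fun b hb => by
      obtain ⟨k, hk, rfl⟩ := Finset.mem_image.1 hb
      obtain ⟨rfl, hx⟩ := hF k hk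
      rw [mem_cthickening_dline_iff δ k hρ] at hx
      change |(x * conj (dDir δ (k.1, 0))).im - _| ≤ ρ at hx
      constructor <;> linarith [abs_le.1 hx]
  convert this using 2; ring

lemma dist_mul_abs_sin_le_of_mem_cthickening_dline {δ ρ : ℝ} (hρ : 0 ≤ ρ) {k : ℤ × ℤ}
    {x y : ℂ} (hx : x ∈ cthickening ρ (dline δ k)) (hy : y ∈ cthickening ρ (dline δ k)) :
    dist x y * |sin (Complex.arg (x - y) - k.1 * δ)| ≤ 2 * ρ := by
  rw [mem_cthickening_dline_iff δ k hρ] at hx hy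
  have hproj : (x * conj (dDir δ k)).im - (y * conj (dDir δ k)).im =
      dist x y * sin (Complex.arg (x - y) - k.1 * δ) := by
    rw [← Complex.sub_im, ← sub_mul, dDir_eq_exp, im_mul_conj_exp, Complex.dist_eq]
  calc dist x y * |sin (Complex.arg (x - y) - k.1 * δ)|
      = |((x * conj (dDir δ k)).im - k.2 * δ) - ((y * conj (dDir δ k)).im - k.2 * δ)| := by
        rw [sub_sub_sub_cancel_right, hproj, abs_mul, abs_of_nonneg dist_nonneg]
    _ ≤ 2 * ρ := (abs_sub _ _).trans (by linarith)

open scoped Classical in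
lemma card_image_fst_filter_mem_tubes_le {δ ρ d : ℝ} (hδ : 0 < δ) (hρ : 0 ≤ ρ) {x y : ℂ}
    (hxy : 0 < dist x y) :
    (#({k ∈ LIdx d δ | x ∈ cthickening ρ (dline δ k) ∧
        y ∈ cthickening ρ (dline δ k)}.image Prod.fst) : ℝ) ≤
      4 * (π * (2 * ρ / dist x y) / δ + 1) := by
  refine le_trans ?_ (card_filter_abs_sin_le hδ (by positivity)
    ⟨Complex.neg_pi_lt_arg (x - y), Complex.arg_le_pi (x - y)⟩)
  refine Nat.cast_le.2 (Finset.card_le_card fun a ha => ?_)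
  obtain ⟨k, hk, rfl⟩ := Finset.mem_image.1 ha
  obtain ⟨hkL, hx, hy⟩ := Finset.mem_filter.1 hk
  have := dist_mul_abs_sin_le_of_mem_cthickening_dline hρ hx hy
  exact Finset.mem_filter.2 ⟨(Finset.mem_product.1 hkL).1, by rw [le_div_iff₀ hxy]; linarith⟩

lemma card_le_card_image_fst_mul {α β : Type*} [DecidableEq α] {F : Finset (α × β)} {K : ℝ}
    (hK : ∀ a, (#{k ∈ F | k.1 = a} : ℝ) ≤ K) : (#F : ℝ) ≤ #(F.image Prod.fst) * K := by
  rw [Finset.card_eq_sum_card_image Prod.fst F]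
  push_cast
  calc ∑ a ∈ F.image Prod.fst, (#{k ∈ F | k.1 = a} : ℝ) ≤ ∑ a ∈ F.image Prod.fst, K :=
        Finset.sum_le_sum fun a _ => hK a
    _ = _ := by rw [Finset.sum_const, nsmul_eq_mul]

open scoped Classical in
lemma card_filter_mem_tubes_le {c δ d : ℝ} (hc : 1 ≤ c) (hδ : 0 < δ) (hδ1 : δ ≤ 1) {x y : ℂ}
    (hxy : dist x y ≤ 2) :
    (#{k ∈ LIdx d δ | x ∈ cthickening (c * δ) (dline δ k) ∧
        y ∈ cthickening (c * δ) (dline δ k)} : ℝ) ≤ 100 * c ^ 2 / max (dist x y) (2 * c * δ) := by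
  set F := {k ∈ LIdx d δ | x ∈ cthickening (c * δ) (dline δ k) ∧
    y ∈ cthickening (c * δ) (dline δ k)}
  have hcδ : 0 ≤ c * δ := by positivity
  have hF : ∀ k ∈ F, k.1 ∈ Finset.Icc 0 ⌊π / δ⌋ ∧ x ∈ cthickening (c * δ) (dline δ k) ∧
      y ∈ cthickening (c * δ) (dline δ k) := fun k hk => by
    obtain ⟨hkL, hmem⟩ := Finset.mem_filter.1 hk
    exact ⟨(Finset.mem_product.1 hkL).1, hmem⟩
  have hcardF : (#F : ℝ) ≤ #(F.image Prod.fst) * (3 * c) :=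
    card_le_card_image_fst_mul fun a => by
      refine (card_le_of_forall_mem_cthickening_dline hδ hcδ (x := x) (a := a)
        fun k hk => ?_).trans ?_
      · obtain ⟨hkF, rfl⟩ := Finset.mem_filter.1 hk
        exact ⟨rfl, (hF k hkF).2.1⟩
      · rw [mul_div_assoc, mul_div_cancel_right₀ _ hδ.ne']; linarith
  rcases le_or_gt (dist x y) (2 * c * δ) with hnear | hfar
  · have hG : (#(F.image Prod.fst) : ℝ) ≤ 5 / δ := by
      refine le_trans ?_ ((card_Icc_zero_floor_div_le hδ pi_pos.le).trans ?_)
      · refine Nat.cast_le.2 (Finset.card_le_card fun a ha => ?_)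
        obtain ⟨k, hk, rfl⟩ := Finset.mem_image.1 ha
        exact (hF k hk).1
      · rw [div_add_one hδ.ne', div_le_div_iff_of_pos_right hδ]; linarith [pi_lt_four]
    calc (#F : ℝ) ≤ 5 / δ * (3 * c) := hcardF.trans (by gcongr)
      _ ≤ 100 * c ^ 2 / (2 * c * δ) := by
        rw [div_mul_eq_mul_div, div_le_div_iff₀ hδ (by positivity)]; nlinarith
      _ = 100 * c ^ 2 / max (dist x y) (2 * c * δ) := by rw [max_eq_right hnear]
  · set r := dist x y
    have hr : 0 < r := lt_of_le_of_lt (by positivity) hfar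
    have hG : (#(F.image Prod.fst) : ℝ) ≤ 4 * (π * (2 * (c * δ) / r) / δ + 1) :=
      card_image_fst_filter_mem_tubes_le hδ hcδ hr
    have h2c : 1 ≤ 2 * c / r := by rw [le_div_iff₀ hr]; linarith
    have hangle : π * (2 * (c * δ) / r) / δ = 2 * π * c / r := by field_simp
    calc (#F : ℝ) ≤ 4 * (2 * π * c / r + 2 * c / r) * (3 * c) :=
          hcardF.trans (by gcongr; linarith)
      _ = 24 * (π + 1) * c ^ 2 / r := by ring
      _ ≤ 100 * c ^ 2 / max r (2 * c * δ) := by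
        rw [max_eq_left hfar.le]; gcongr; linarith [pi_lt_d2]

lemma inv_le_sum_range_pow_two {r ρ : ℝ} (hrρ : r ≤ ρ) (hr : r ≤ 2) :
    ∀ {J : ℕ}, 1 ≤ 2 ^ J * ρ →
      ρ⁻¹ ≤ ∑ j ∈ Finset.range (J + 1), if r ≤ 2 / 2 ^ j then (2 : ℝ) ^ j else 0
  | 0, h => by simpa [hr] using inv_le_one_of_one_le₀ (by simpa using h)
  | J + 1, h => by
    have hρ : 0 < ρ := pos_of_mul_pos_right (one_pos.trans_le h) (by positivity)
    rw [Finset.sum_range_succ]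
    by_cases hJ : 1 ≤ 2 ^ J * ρ
    · exact le_add_of_le_of_nonneg (inv_le_sum_range_pow_two hrρ hr hJ) (by positivity)
    · have hr' : r ≤ 2 / 2 ^ (J + 1) := by
        have : r * 2 ^ J ≤ ρ * 2 ^ J := mul_le_mul_of_nonneg_right hrρ (by positivity)
        rw [pow_succ, le_div_iff₀ (by positivity)]; linarith
      rw [if_pos hr']
      refine le_add_of_nonneg_of_le (Finset.sum_nonneg fun j _ => by positivity) ?_
      rw [inv_le_iff_one_le_mul₀ hρ]; linarith

lemma sum_inv_max_dist_le {X : Type*} [PseudoMetricSpace X] (A : Finset X) (x : X) {η : ℝ}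
    {J : ℕ} (hJ : 1 ≤ 2 ^ J * η) (hA : ∀ y ∈ A, dist x y ≤ 2) :
    ∑ y ∈ A, (max (dist x y) η)⁻¹ ≤
      ∑ j ∈ Finset.range (J + 1), 2 ^ j * (#{y ∈ A | dist x y ≤ 2 / 2 ^ j} : ℝ) :=
  calc ∑ y ∈ A, (max (dist x y) η)⁻¹
      ≤ ∑ y ∈ A, ∑ j ∈ Finset.range (J + 1), if dist x y ≤ 2 / 2 ^ j then (2 : ℝ) ^ j else 0 :=
        Finset.sum_le_sum fun y hy => inv_le_sum_range_pow_two (le_max_left _ _) (hA y hy)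
          (hJ.trans (by gcongr; exact le_max_right _ _))
    _ = _ := by
        rw [Finset.sum_comm]
        refine Finset.sum_congr rfl fun j _ => ?_
        rw [← Finset.sum_filter, Finset.sum_const, nsmul_eq_mul, mul_comm]

lemma mul_rpow_div_le {α δ t : ℝ} (hα : α ≤ 1) (hδ : 0 < δ) (ht : 0 < t) (htδ : t ≤ δ⁻¹) :
    t * (2 / t) ^ α ≤ 2 * δ ^ (α - 1) := by
  have h2 : (2 : ℝ) ^ α ≤ 2 := by
    simpa using Real.rpow_le_rpow_of_exponent_le one_le_two hα
  have ht' : t ^ (1 - α) ≤ δ ^ (α - 1) := by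
    calc t ^ (1 - α) ≤ δ⁻¹ ^ (1 - α) := Real.rpow_le_rpow ht.le htδ (by linarith)
      _ = δ ^ (α - 1) := by rw [Real.inv_rpow hδ.le, ← Real.rpow_neg hδ.le, neg_sub]
  calc t * (2 / t) ^ α = 2 ^ α * t ^ (1 - α) := by
        rw [Real.div_rpow zero_le_two ht.le, Real.rpow_sub ht, Real.rpow_one]; field_simp
    _ ≤ 2 * δ ^ (α - 1) := by gcongr

lemma sum_inv_max_dist_le_of_frostman {X : Type*} [PseudoMetricSpace X] (A : Finset X) (x : X)
    {α δ η K : ℝ} {J : ℕ} (hα : α ≤ 1) (hδ : 0 < δ) (hK : 0 ≤ K) (hJδ : 2 ^ J ≤ δ⁻¹)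
    (hJη : 1 ≤ 2 ^ J * η) (hA : ∀ y ∈ A, dist x y ≤ 2)
    (hball : ∀ r, δ ≤ r → (#{y ∈ A | dist x y ≤ r} : ℝ) ≤ K * r ^ α) :
    ∑ y ∈ A, (max (dist x y) η)⁻¹ ≤ (J + 1) * (2 * K * δ ^ (α - 1)) := by
  refine (sum_inv_max_dist_le A x hJη hA).trans ?_
  calc ∑ j ∈ Finset.range (J + 1), 2 ^ j * (#{y ∈ A | dist x y ≤ 2 / 2 ^ j} : ℝ)
      ≤ ∑ j ∈ Finset.range (J + 1), 2 * K * δ ^ (α - 1) := Finset.sum_le_sum fun j hj => by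
        have hjδ : (2 : ℝ) ^ j ≤ δ⁻¹ :=
          (pow_le_pow_right₀ one_le_two (Finset.mem_range_succ_iff.1 hj)).trans hJδ
        have hr : δ ≤ 2 / 2 ^ j := by
          rw [le_div_iff₀ (by positivity)]; nlinarith [mul_inv_cancel₀ hδ.ne']
        calc 2 ^ j * (#{y ∈ A | dist x y ≤ 2 / 2 ^ j} : ℝ) ≤ 2 ^ j * (K * (2 / 2 ^ j) ^ α) := by
              gcongr; exact hball _ hr
          _ = K * (2 ^ j * (2 / 2 ^ j) ^ α) := by ring
          _ ≤ K * (2 * δ ^ (α - 1)) :=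
            mul_le_mul_of_nonneg_left (mul_rpow_div_le hα hδ (by positivity) hjδ) hK
          _ = 2 * K * δ ^ (α - 1) := by ring
    _ = (J + 1) * (2 * K * δ ^ (α - 1)) := by simp

open scoped Classical in
lemma sum_card_filter_sq {ι α : Type*} (L : Finset ι) (A : Finset α) (P : ι → α → Prop) :
    ∑ k ∈ L, #{x ∈ A | P k x} ^ 2 = ∑ x ∈ A, ∑ y ∈ A, #{k ∈ L | P k x ∧ P k y} := by
  simp_rw [sq, Finset.card_filter, Finset.sum_mul_sum, ite_zero_mul_ite_zero, mul_one]
  rw [Finset.sum_comm]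
  exact Finset.sum_congr rfl fun x _ => Finset.sum_comm

lemma ten_le_ncard_of_forall_isLine {A : Set ℂ} (hA : A.Finite) (hne : A.Nonempty) {ρ : ℝ}
    (hline : ∀ ℓ : Set ℂ, IsLine ℓ → ((A ∩ cthickening ρ ℓ).ncard : ℝ) ≤ A.ncard / 10) :
    10 ≤ (A.ncard : ℝ) := by
  obtain ⟨x, hx⟩ := hne
  obtain ⟨ℓ, hℓ, hxℓ⟩ : ∃ ℓ, IsLine ℓ ∧ x ∈ ℓ := ⟨_, ⟨x, 1, one_ne_zero, rfl⟩, 0, by simp⟩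
  have hpos : (1 : ℝ) ≤ (A ∩ cthickening ρ ℓ).ncard :=
    Nat.one_le_cast.2 <|
      (Set.ncard_pos (hA.inter_of_left _)).2 ⟨x, hx, self_subset_cthickening _ hxℓ⟩
  linarith [hline ℓ hℓ]

lemma sub_sq_le_of_le_half_iff {a b : ℝ} (ha : a ∈ Icc (0 : ℝ) 1) (hb : b ∈ Icc (0 : ℝ) 1)
    (h : a ≤ 1 / 2 ↔ b ≤ 1 / 2) : (a - b) ^ 2 ≤ 1 / 4 := by
  by_cases ha' : a ≤ 1 / 2
  · have hb' := h.1 ha'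
    nlinarith [ha.1, hb.1]
  · have hb' : 1 / 2 < b := not_le.1 fun hb' => ha' (h.2 hb')
    nlinarith [ha.2, hb.2, not_le.1 ha']

/-- Pigeonhole over the four quarters of the unit square. -/
lemma sq_le_half_of_five_le_ncard {δ : ℝ} (hδ : 0 ≤ δ) {A : Set ℂ} (hA : A ⊆ unitSq)
    (hsep : ∀ x ∈ A, ∀ y ∈ A, x ≠ y → δ ≤ dist x y) (h5 : 5 ≤ A.ncard) : δ ^ 2 ≤ 1 / 2 := by
  obtain ⟨x, hx, y, hy, hxy, hq⟩ := Set.exists_ne_map_eq_of_ncard_lt_of_maps_to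
    (s := A) (t := (univ : Set (Bool × Bool))) (by simp; omega)
    (f := fun z => (decide (z.re ≤ 1 / 2), decide (z.im ≤ 1 / 2))) fun _ _ => mem_univ _
  simp only [Prod.mk.injEq, decide_eq_decide] at hq
  have hre := sub_sq_le_of_le_half_iff (hA hx).1 (hA hy).1 hq.1
  have him := sub_sq_le_of_le_half_iff (hA hx).2 (hA hy).2 hq.2
  calc δ ^ 2 ≤ dist x y ^ 2 := pow_le_pow_left₀ hδ (hsep x hx y hy hxy) 2
    _ = (x.re - y.re) ^ 2 + (x.im - y.im) ^ 2 := by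
      rw [Complex.dist_eq_re_im, Real.sq_sqrt (by positivity)]
    _ ≤ 1 / 2 := by linarith

lemma sq_le_half_of_discUnconc {α C δ : ℝ} (hC : 0 < C) (hδ : 0 < δ) {A : Set ℂ}
    (hA : A ⊆ unitSq) (h : DiscUnconc α C δ A) : δ ^ 2 ≤ 1 / 2 := by
  obtain ⟨hfin, hsep, hlo, -, -, hline⟩ := h
  have hne : A.Nonempty := Set.nonempty_of_ncard_ne_zero fun h₀ => by
    rw [h₀, Nat.cast_zero] at hlo; exact (lt_of_lt_of_le (by positivity) hlo).false
  have h10 := ten_le_ncard_of_forall_isLine hfin hne hline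
  exact sq_le_half_of_five_le_ncard hδ.le hA hsep
    (by exact_mod_cast (by linarith : (5 : ℝ) ≤ A.ncard))

lemma nat_add_one_le_mul_abs_log {δ : ℝ} (hδ : 0 < δ) (hδ2 : δ ^ 2 ≤ 1 / 2) {J : ℕ}
    (hJ : 2 ^ J ≤ δ⁻¹) : (J : ℝ) + 1 ≤ 6 * |log δ| := by
  have hδ1 : δ < 1 := by nlinarith
  rw [abs_of_neg (log_neg hδ hδ1), ← log_inv]
  have hJlog : J * log 2 ≤ log δ⁻¹ := by
    rw [← log_pow]; exact log_le_log (by positivity) hJ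
  have h2log : log 2 ≤ 2 * log δ⁻¹ := by
    rw [show 2 * log δ⁻¹ = log (δ⁻¹ ^ 2) by rw [log_pow]; norm_num, inv_pow]
    refine log_le_log (by norm_num) ?_
    rw [le_inv_comm₀ (by norm_num) (by positivity)]
    linarith
  have := log_two_gt_d9
  nlinarith

lemma inv_le_card_Icc_zero_floor_div {δ t : ℝ} (hδ : 0 < δ) (ht : 1 ≤ t) :
    δ⁻¹ ≤ (#(Finset.Icc 0 ⌊t / δ⌋) : ℝ) := by
  have h₀ : 0 ≤ ⌊t / δ⌋ + 1 - 0 := by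
    have := Int.floor_nonneg.2 (div_nonneg (zero_le_one.trans ht) hδ.le); omega
  rw [Int.card_Icc, ← Int.cast_natCast, Int.toNat_of_nonneg h₀]
  push_cast
  calc δ⁻¹ ≤ t / δ := by rw [div_eq_mul_inv]; exact le_mul_of_one_le_left (by positivity) ht
    _ ≤ ⌊t / δ⌋ + 1 - 0 := by linarith [Int.lt_floor_add_one (t / δ)]

lemma inv_mul_inv_le_card_LIdx {d δ : ℝ} (hd : 1 ≤ d) (hδ : 0 < δ) :
    δ⁻¹ * δ⁻¹ ≤ (#(LIdx d δ) : ℝ) := by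
  rw [LIdx, Finset.card_product, Nat.cast_mul]
  exact mul_le_mul (inv_le_card_Icc_zero_floor_div hδ (by linarith [pi_gt_three]))
    (inv_le_card_Icc_zero_floor_div hδ hd) (by positivity) (by positivity)

open scoped Classical in
lemma ncard_coe_inter {α : Type*} (A : Finset α) (S : Set α) :
    ((A : Set α) ∩ S).ncard = #{x ∈ A | x ∈ S} := by
  rw [← Set.ncard_coe_finset, Finset.coe_filter]; rfl

lemma dist_le_two_of_mem_unitSq {x y : ℂ} (hx : x ∈ unitSq) (hy : y ∈ unitSq) : dist x y ≤ 2 := by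
  obtain ⟨⟨hx₁, hx₂⟩, hx₃, hx₄⟩ := hx
  obtain ⟨⟨hy₁, hy₂⟩, hy₃, hy₄⟩ := hy
  rw [Complex.dist_eq_re_im, Real.sqrt_le_iff]
  constructor <;> nlinarith

lemma sum_sq_ncard_inter_cthickening_dline_le {c δ d α K : ℝ} (hc : 1 ≤ c) (hδ : 0 < δ)
    (hδ1 : δ ≤ 1) (hα : α ≤ 1) (hK : 0 ≤ K) {J : ℕ} (hJ : 2 ^ J ≤ δ⁻¹) (hJ' : δ⁻¹ < 2 ^ (J + 1))
    (A : Finset ℂ) (hA : (A : Set ℂ) ⊆ unitSq)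
    (hball : ∀ x r, δ ≤ r → (((A : Set ℂ) ∩ closedBall x r).ncard : ℝ) ≤ K * r ^ α) :
    ∑ k ∈ LIdx d δ, (((A : Set ℂ) ∩ cthickening (c * δ) (dline δ k)).ncard : ℝ) ^ 2 ≤
      #A * (100 * c ^ 2 * ((J + 1) * (2 * K * δ ^ (α - 1)))) := by
  classical
  have hJη : 1 ≤ 2 ^ J * (2 * c * δ) := by
    rw [inv_lt_iff_one_lt_mul₀ hδ, pow_succ] at hJ'
    nlinarith [pow_pos (two_pos : (0 : ℝ) < 2) J]
  have hdist : ∀ x ∈ A, ∀ y ∈ A, dist x y ≤ 2 := fun x hx y hy =>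
    dist_le_two_of_mem_unitSq (hA hx) (hA hy)
  have hfrostman : ∀ x ∈ A, ∑ y ∈ A, (max (dist x y) (2 * c * δ))⁻¹ ≤
      (J + 1) * (2 * K * δ ^ (α - 1)) := fun x hx =>
    sum_inv_max_dist_le_of_frostman A x hα hδ hK hJ hJη (hdist x hx) fun r hr => by
      simpa [ncard_coe_inter, dist_comm] using hball x r hr
  calc ∑ k ∈ LIdx d δ, (((A : Set ℂ) ∩ cthickening (c * δ) (dline δ k)).ncard : ℝ) ^ 2
      = ∑ x ∈ A, ∑ y ∈ A, (#{k ∈ LIdx d δ | x ∈ cthickening (c * δ) (dline δ k) ∧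
          y ∈ cthickening (c * δ) (dline δ k)} : ℝ) := by
        simp_rw [ncard_coe_inter]
        exact_mod_cast sum_card_filter_sq (LIdx d δ) A
          fun k x => x ∈ cthickening (c * δ) (dline δ k)
    _ ≤ ∑ x ∈ A, ∑ y ∈ A, 100 * c ^ 2 * (max (dist x y) (2 * c * δ))⁻¹ :=
        Finset.sum_le_sum fun x hx => Finset.sum_le_sum fun y hy =>
          card_filter_mem_tubes_le hc hδ hδ1 (hdist x hx y hy)
    _ ≤ ∑ x ∈ A, 100 * c ^ 2 * ((J + 1) * (2 * K * δ ^ (α - 1))) :=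
        Finset.sum_le_sum fun x hx => by rw [← Finset.mul_sum]; gcongr; exact hfrostman x hx
    _ = #A * (100 * c ^ 2 * ((J + 1) * (2 * K * δ ^ (α - 1)))) := by
        rw [Finset.sum_const, nsmul_eq_mul]

theorem stmt8_general (c d α C₀ : ℝ) (hc : 1 ≤ c) (hd : 1 ≤ d)
    (hα1 : α ≤ 1) (hC₀ : 0 < C₀) :
    ∃ C M : ℝ, 0 < C ∧ 0 < M ∧
      ∀ (δ : ℝ) (A : Set ℂ), 0 < δ → δ < 1 → A ⊆ unitSq → DiscUnconc α C₀ δ A →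
        (1 / ((LIdx d δ).card : ℝ)) *
            ∑ k ∈ LIdx d δ, (((A ∩ cthickening (c * δ) (dline δ k)).ncard : ℝ)) ^ 2 ≤
          C * |Real.log δ| ^ M * δ ^ (1 - α) := by
  refine ⟨1200 * c ^ 2 * C₀ ^ 3, 1, by positivity, one_pos, ?_⟩
  rintro δ A hδ hδ1 hA hDU
  have hδ2 := sq_le_half_of_discUnconc hC₀ hδ hA hDU
  obtain ⟨hfin, -, -, hhi, hball, -⟩ := hDU
  obtain ⟨J, hJ, hJ'⟩ := exists_nat_pow_near ((one_le_inv₀ hδ).2 hδ1.le) one_lt_two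
  have hlog := nat_add_one_le_mul_abs_log hδ hδ2 hJ
  have hL := inv_mul_inv_le_card_LIdx hd hδ
  obtain ⟨A, rfl⟩ := hfin.exists_finset_coe
  rw [Set.ncard_coe_finset] at hhi hball
  have hsum := sum_sq_ncard_inter_cthickening_dline_le (d := d) hc hδ hδ1.le hα1
    (by positivity : 0 ≤ C₀ * #A) hJ hJ' A hA fun x r hr => (hball x r hr).trans_eq (by ring)
  have hpow : δ * δ * (δ ^ (-α)) ^ 2 * δ ^ (α - 1) = δ ^ (1 - α) := by
    have := Real.rpow_pos_of_pos hδ α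
    rw [Real.rpow_neg hδ.le, Real.rpow_sub hδ, Real.rpow_sub hδ, Real.rpow_one]
    field_simp
  calc 1 / (#(LIdx d δ) : ℝ) *
        ∑ k ∈ LIdx d δ, ((↑A ∩ cthickening (c * δ) (dline δ k)).ncard : ℝ) ^ 2
      ≤ δ * δ * (#A * (100 * c ^ 2 * ((J + 1) * (2 * (C₀ * #A) * δ ^ (α - 1))))) := by
        refine mul_le_mul ?_ hsum (Finset.sum_nonneg fun _ _ => by positivity) (by positivity)
        simpa using one_div_le_one_div_of_le (by positivity) hL
    _ = 200 * c ^ 2 * C₀ * (J + 1) * (#A : ℝ) ^ 2 * (δ * δ * δ ^ (α - 1)) := by ring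
    _ ≤ 200 * c ^ 2 * C₀ * (6 * |log δ|) * (C₀ * δ ^ (-α)) ^ 2 * (δ * δ * δ ^ (α - 1)) := by
        gcongr
    _ = 1200 * c ^ 2 * C₀ ^ 3 * |log δ| ^ (1 : ℝ) * δ ^ (1 - α) := by
        rw [Real.rpow_one, ← hpow]; ring

/-- `L²` bound on the projection counting function `f_δ(ℓ) = #(A ∩ ℓ^{cδ})`:
`‖f_δ‖₂² ≲ |log δ|^M δ^{1-α}`. -/
theorem stmt8 (c d α C₀ : ℝ) (hc : 1 ≤ c) (hd : 1 ≤ d)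
    (hα0 : 0 < α) (hα1 : α ≤ 1) (hC₀ : 0 < C₀) :
    ∃ C M : ℝ, 0 < C ∧ 0 < M ∧
      ∀ (δ : ℝ) (A : Set ℂ), 0 < δ → δ < 1 → A ⊆ unitSq → DiscUnconc α C₀ δ A →
        (1 / ((LIdx d δ).card : ℝ)) *
            ∑ k ∈ LIdx d δ, (((A ∩ cthickening (c * δ) (dline δ k)).ncard : ℝ)) ^ 2 ≤
          C * |Real.log δ| ^ M * δ ^ (1 - α) :=
  stmt8_general c d α C₀ hc hd hα1 hC₀
end

section
/- Let 𝒥 ⊆ ℝ² be a self-similar set that is not contained in a line. Then there exists α > 0 such that for every angle θ ∈ [0, 2π], the Hausdorff dimension of the orthogonal projection satisfies dim_H(π_θ(𝒥)) ≥ α, where π_θ(x,y) = x cos θ + y sin θ. -/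
/-!
A compact set that is not contained in a line has, in every direction `u`, two points whose
projections onto `u` are `d`-apart, with `d > 0` independent of `u` (compactness of the circle).
Covering `J` by small cylinders `T_w(J)` (images of `J` under compositions of the maps) around
these two points gives two cylinders of ratio at least `ρ` whose projections are `d/2`-apart.
A cylinder is a similar copy of `J`, so the construction can be repeated inside it, in the rotated
direction. This builds a binary tree of cylinders whose projections at depth `m` are
`(d/2) ρ^m`-separated. On the resulting Cantor set of projected points, the binary-digit map
onto `[0, 1]` is Hölder of exponent `log 2 / log ρ⁻¹`, and this exponent is a lower bound for
the dimension of every projection.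
-/

open MeasureTheory Metric Set

/-- The linear projection `π_θ(x,y) = x cos θ + y sin θ`. -/
noncomputable def linproj (θ : ℝ) (z : ℂ) : ℝ := z.re * Real.cos θ + z.im * Real.sin θ

open scoped NNReal ENNReal InnerProductSpace
open Module (finrank)

theorem dimH_range_le_of_dist_le {α X Y : Type*} [MetricSpace X] [MetricSpace Y]
    {f : α → Y} {ψ : α → X} {C r : ℝ≥0} (hr : 0 < r)
    (h : ∀ a b, dist (f a) (f b) ≤ C * dist (ψ a) (ψ b) ^ (r : ℝ)) :
    dimH (range f) ≤ dimH (range ψ) / r := by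
  set g : range ψ → Y := f ∘ rangeSplitting ψ
  have hg : HolderWith C r g := by
    intro x y
    have hxy := h (rangeSplitting ψ x) (rangeSplitting ψ y)
    rw [apply_rangeSplitting ψ x, apply_rangeSplitting ψ y, ← Subtype.dist_eq] at hxy
    rw [edist_dist, edist_dist, ← ENNReal.ofReal_coe_nnreal,
      ENNReal.ofReal_rpow_of_nonneg dist_nonneg r.coe_nonneg, ← ENNReal.ofReal_mul C.coe_nonneg]
    exact ENNReal.ofReal_le_ofReal hxy
  have hrange : range g = range f := by
    refine (range_comp_subset_range _ _).antisymm ?_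
    rintro _ ⟨a, rfl⟩
    refine ⟨⟨ψ a, mem_range_self a⟩, dist_le_zero.1 ?_⟩
    simpa [apply_rangeSplitting, Real.zero_rpow (NNReal.coe_pos.2 hr).ne'] using
      h (rangeSplitting ψ ⟨ψ a, mem_range_self a⟩) a
  calc dimH (range f) = dimH (range g) := by rw [hrange]
    _ ≤ dimH (univ : Set (range ψ)) / r := hg.dimH_range_le hr
    _ = dimH (range ψ) / r := by
      rw [← isometry_subtype_coe.dimH_image, image_univ, Subtype.range_coe]

theorem le_dimH_range_of_le_dist {X : Type*} [MetricSpace X] {ψ : (ℕ → Fin 2) → X} {ρ σ : ℝ}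
    (hρ0 : 0 < ρ) (hρ1 : ρ < 1) (hσ : 0 < σ)
    (hψ : ∀ ω ω' m, (∀ k < m, ω k = ω' k) → ω m ≠ ω' m → σ * ρ ^ m ≤ dist (ψ ω) (ψ ω')) :
    ENNReal.ofReal (Real.log 2 / Real.log ρ⁻¹) ≤ dimH (range ψ) := by
  set r := Real.log 2 / Real.log ρ⁻¹
  have hr : 0 < r := div_pos (Real.log_pos one_lt_two) (Real.log_pos ((one_lt_inv₀ hρ0).2 hρ1))
  have hρr : ρ ^ r = 2⁻¹ := by
    have hlog : Real.log ρ * r = -Real.log 2 := by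
      simp only [r, Real.log_inv]
      field_simp [(Real.log_neg hρ0 hρ1).ne]
    rw [Real.rpow_def_of_pos hρ0, hlog, Real.exp_neg, Real.exp_log two_pos]
  have hdigits : ∀ ω ω', dist (Real.ofDigits ω) (Real.ofDigits ω') ≤
      (σ ^ (-r)).toNNReal * dist (ψ ω) (ψ ω') ^ (r.toNNReal : ℝ) := by
    intro ω ω'
    rw [Real.coe_toNNReal _ (by positivity), Real.coe_toNNReal _ hr.le]
    obtain rfl | hne := eq_or_ne ω ω'
    · rw [dist_self]; positivity
    have hex := Function.ne_iff.1 hne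
    have hlt : ∀ k < Nat.find hex, ω k = ω' k := fun k hk => not_not.1 (Nat.find_min hex hk)
    calc dist (Real.ofDigits ω) (Real.ofDigits ω') ≤ ((2 : ℝ) ^ Nat.find hex)⁻¹ := by
          simpa [Real.dist_eq] using Real.abs_ofDigits_sub_ofDigits_le hlt
      _ = σ ^ (-r) * (σ * ρ ^ Nat.find hex) ^ r := by
          rw [Real.mul_rpow hσ.le (by positivity), ← mul_assoc, ← Real.rpow_add hσ, neg_add_cancel,
            Real.rpow_zero, one_mul, ← Real.rpow_natCast ρ, ← Real.rpow_mul hρ0.le, mul_comm,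
            Real.rpow_mul hρ0.le, hρr, Real.rpow_natCast, inv_pow]
      _ ≤ σ ^ (-r) * dist (ψ ω) (ψ ω') ^ r := by
          gcongr; exact hψ ω ω' _ hlt (Nat.find_spec hex)
  have hIcc : 1 ≤ dimH (range (Real.ofDigits (b := 2))) := by
    calc (1 : ℝ≥0∞) = dimH (Icc (0 : ℝ) 1) := by
          rw [Real.dimH_of_nonempty_interior (by simp)]; simp
      _ ≤ _ := dimH_mono (by simpa using (Real.ofDigits_SurjOn (b := 2) one_lt_two).subset_range)
  have hdim := hIcc.trans (dimH_range_le_of_dist_le (Real.toNNReal_pos.2 hr) hdigits)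
  rwa [ENNReal.le_div_iff_mul_le (Or.inl (by simpa using hr)) (Or.inl (by simp)), one_mul] at hdim

section Similarity

variable {E : Type*} [NormedAddCommGroup E] [NormedSpace ℝ E]

def IsSimilarity (r : ℝ) (f : E → E) : Prop :=
  ∃ O : E ≃ₗᵢ[ℝ] E, ∀ x y, f x - f y = r • O (x - y)

theorem isSimilarity_id : IsSimilarity (1 : ℝ) (id : E → E) :=
  ⟨LinearIsometryEquiv.refl ℝ E, fun x y => by simp⟩

theorem IsSimilarity.comp {r r' : ℝ} {f g : E → E} (hf : IsSimilarity r f)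
    (hg : IsSimilarity r' g) : IsSimilarity (r * r') (f ∘ g) := by
  obtain ⟨O, hO⟩ := hf
  obtain ⟨O', hO'⟩ := hg
  refine ⟨O'.trans O, fun x y => ?_⟩
  simp [hO, hO', smul_smul]

theorem IsSimilarity.lipschitzWith {r : ℝ} {f : E → E} (hf : IsSimilarity r f) :
    LipschitzWith ‖r‖₊ f := by
  obtain ⟨O, hO⟩ := hf
  refine LipschitzWith.of_dist_le_mul fun x y => ?_
  rw [dist_eq_norm, hO, norm_smul, O.norm_map, coe_nnnorm, dist_eq_norm]

theorem IsSimilarity.dist_le_mul_diam {r : ℝ} {f : E → E} (hf : IsSimilarity r f) {J : Set E}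
    (hJ : Bornology.IsBounded J) {p p' : E} (hp : p ∈ f '' J) (hp' : p' ∈ f '' J) :
    dist p p' ≤ |r| * diam J :=
  (dist_le_diam_of_mem (hf.lipschitzWith.isBounded_image hJ) hp hp').trans
    (by simpa using hf.lipschitzWith.diam_image_le J hJ)

theorem IsSimilarity.inner_sub {F : Type*} [NormedAddCommGroup F] [InnerProductSpace ℝ F]
    {r : ℝ} {f : F → F} (hf : IsSimilarity r f) (u : F) :
    ∃ v, ‖v‖ = ‖u‖ ∧ ∀ x y : F, ⟪u, f x - f y⟫_ℝ = r * ⟪v, x - y⟫_ℝ := by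
  obtain ⟨O, hO⟩ := hf
  refine ⟨O.symm u, O.symm.norm_map u, fun x y => ?_⟩
  rw [hO, real_inner_smul_right, O.symm.inner_map_eq_flip, LinearIsometryEquiv.symm_symm]

end Similarity

section Words

variable {ι α : Type*}

def wordMap (T : ι → α → α) (w : List ι) : α → α := w.foldr (fun i f => T i ∘ f) id

def wordRatio (lam : ι → ℝ) (w : List ι) : ℝ := (w.map lam).prod

variable {T : ι → α → α} {lam : ι → ℝ}

theorem wordMap_append (w w' : List ι) : wordMap T (w ++ w') = wordMap T w ∘ wordMap T w' := by
  induction w with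
  | nil => rfl
  | cons i w ih => simp only [wordMap, List.cons_append, List.foldr_cons] at ih ⊢; rw [ih]; rfl

theorem wordRatio_append (w w' : List ι) :
    wordRatio lam (w ++ w') = wordRatio lam w * wordRatio lam w' := by
  simp [wordRatio]

theorem pow_length_le_wordRatio {c : ℝ} (hc : 0 ≤ c) (h : ∀ i, c ≤ lam i) (w : List ι) :
    c ^ w.length ≤ wordRatio lam w := by
  induction w with
  | nil => simp [wordRatio]
  | cons i w ih =>
    simp only [wordRatio, List.map_cons, List.prod_cons, List.length_cons] at ih ⊢
    rw [pow_succ']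
    exact mul_le_mul (h i) ih (pow_nonneg hc _) (hc.trans (h i))

theorem wordRatio_le_pow_length {q : ℝ} (h0 : ∀ i, 0 ≤ lam i) (h : ∀ i, lam i ≤ q)
    (w : List ι) : wordRatio lam w ≤ q ^ w.length := by
  induction w with
  | nil => simp [wordRatio]
  | cons i w ih =>
    simp only [wordRatio, List.map_cons, List.prod_cons, List.length_cons] at ih ⊢
    rw [pow_succ']
    exact mul_le_mul (h i) ih (List.prod_nonneg fun x hx => by
      obtain ⟨j, -, rfl⟩ := List.mem_map.1 hx; exact h0 j) ((h0 i).trans (h i))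

theorem wordMap_image_subset {J : Set α} (h : ∀ i, T i '' J ⊆ J) (w : List ι) :
    wordMap T w '' J ⊆ J := by
  induction w with
  | nil => simp [wordMap]
  | cons i w ih =>
    rw [wordMap, List.foldr_cons, image_comp]
    exact (image_mono ih).trans (h i)

theorem exists_length_eq_mem_wordMap_image {J : Set α} (h : J ⊆ ⋃ i, T i '' J) (n : ℕ) {x : α}
    (hx : x ∈ J) : ∃ w : List ι, w.length = n ∧ x ∈ wordMap T w '' J := by
  induction n generalizing x with
  | zero => exact ⟨[], rfl, x, hx, rfl⟩
  | succ n ih =>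
    obtain ⟨i, y, hy, rfl⟩ := mem_iUnion.1 (h hx)
    obtain ⟨w, hw, z, hz, rfl⟩ := ih hy
    exact ⟨i :: w, by simp [hw], z, hz, rfl⟩

end Words

theorem IsSimilarity.wordMap {ι E : Type*} [NormedAddCommGroup E] [NormedSpace ℝ E]
    {T : ι → E → E} {lam : ι → ℝ} (hT : ∀ i, IsSimilarity (lam i) (T i)) (w : List ι) :
    IsSimilarity (wordRatio lam w) (wordMap T w) := by
  induction w with
  | nil => exact isSimilarity_id
  | cons i w ih => simpa [wordRatio, _root_.wordMap] using (hT i).comp ih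

section Tree

variable {ι α : Type*} {T : ι → α → α} {lam : ι → ℝ} {c : List ι → Fin 2 → List ι}

/-- The node at depth `k` on the branch `ω` of the binary tree of words in which the children
of a node `w` are `w ++ c w 0` and `w ++ c w 1`. -/
def treeWord (c : List ι → Fin 2 → List ι) (ω : ℕ → Fin 2) : ℕ → List ι
  | 0 => []
  | k + 1 => treeWord c ω k ++ c (treeWord c ω k) (ω k)

theorem treeWord_congr {ω ω' : ℕ → Fin 2} {m : ℕ} (h : ∀ k < m, ω k = ω' k) :
    treeWord c ω m = treeWord c ω' m := by
  induction m with
  | zero => rfl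
  | succ m ih => rw [treeWord, treeWord, ih fun k hk => h k (by omega), h m (by omega)]

theorem image_wordMap_treeWord_succ (J : Set α) (ω : ℕ → Fin 2) (k : ℕ) :
    wordMap T (treeWord c ω (k + 1)) '' J =
      wordMap T (treeWord c ω k) '' (wordMap T (c (treeWord c ω k) (ω k)) '' J) := by
  simp only [treeWord, wordMap_append, image_comp]

theorem pow_le_wordRatio_treeWord {ρ : ℝ} (hρ : 0 ≤ ρ) (hc : ∀ w b, ρ ≤ wordRatio lam (c w b))
    (ω : ℕ → Fin 2) (k : ℕ) : ρ ^ k ≤ wordRatio lam (treeWord c ω k) := by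
  induction k with
  | zero => simp [treeWord, wordRatio]
  | succ k ih =>
    rw [treeWord, wordRatio_append, pow_succ]
    exact mul_le_mul ih (hc _ _) hρ ((pow_nonneg hρ _).trans ih)

end Tree

section Plane

variable {E : Type*} [NormedAddCommGroup E] [InnerProductSpace ℝ E]

theorem exists_smul_eq_of_inner_eq_zero (hE : finrank ℝ E = 2) {u v w : E} (hu : u ≠ 0)
    (hv : v ≠ 0) (huv : ⟪u, v⟫_ℝ = 0) (huw : ⟪u, w⟫_ℝ = 0) : ∃ t : ℝ, t • v = w := by
  have : Fact (finrank ℝ E = 1 + 1) := ⟨hE⟩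
  have hvK : v ∈ (ℝ ∙ u)ᗮ := Submodule.mem_orthogonal_singleton_iff_inner_right.2 huv
  have hwK : w ∈ (ℝ ∙ u)ᗮ := Submodule.mem_orthogonal_singleton_iff_inner_right.2 huw
  obtain ⟨t, ht⟩ := (finrank_eq_one_iff_of_nonzero' (⟨v, hvK⟩ : (ℝ ∙ u)ᗮ) (by simpa using hv)).1
    (Submodule.finrank_orthogonal_span_singleton hu) ⟨w, hwK⟩
  exact ⟨t, congrArg Subtype.val ht⟩

theorem exists_pos_le_abs_inner_sub_of_not_collinear (hE : finrank ℝ E = 2) {J : Set E}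
    (hJ : ¬Collinear ℝ J) : ∃ d > 0, ∀ u : E, ‖u‖ = 1 → ∃ x ∈ J, ∃ y ∈ J, d ≤ |⟪u, x - y⟫_ℝ| := by
  have : FiniteDimensional ℝ E := Module.finite_of_finrank_eq_succ hE
  have : Nontrivial E := Module.nontrivial_of_finrank_eq_succ hE
  obtain ⟨a, ha⟩ : J.Nonempty := nonempty_iff_ne_empty.2 fun h => hJ (h ▸ collinear_empty ℝ E)
  rw [collinear_iff_of_mem ha] at hJ
  push Not at hJ
  obtain ⟨b, hb, hba⟩ := hJ 0
  obtain ⟨c, hc, hca⟩ := hJ (b - a)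
  set f : E → ℝ := fun u => max |⟪u, b - a⟫_ℝ| |⟪u, c - a⟫_ℝ|
  have hpos : ∀ u : E, ‖u‖ = 1 → 0 < f u := by
    intro u hu
    by_contra! h
    obtain ⟨t, ht⟩ := exists_smul_eq_of_inner_eq_zero hE (norm_ne_zero_iff.1 (by simp [hu]))
      (sub_ne_zero.2 (by simpa using hba 0)) (abs_nonpos_iff.1 ((le_max_left _ _).trans h))
      (abs_nonpos_iff.1 ((le_max_right _ _).trans h))
    exact hca t (by rw [ht, vadd_eq_add, sub_add_cancel])
  obtain ⟨u₀, hu₀, hmin⟩ := (isCompact_sphere (0 : E) 1).exists_isMinOn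
    (NormedSpace.sphere_nonempty.2 zero_le_one) (by fun_prop : Continuous f).continuousOn
  refine ⟨f u₀, hpos u₀ (by simpa using hu₀), fun u hu => ?_⟩
  rcases le_max_iff.1 (isMinOn_iff.1 hmin u (by simpa using hu)) with h | h
  · exact ⟨b, hb, a, ha, h⟩
  · exact ⟨c, hc, a, ha, h⟩

end Plane

section SelfSimilar

variable {ι E : Type*} [NormedAddCommGroup E] [InnerProductSpace ℝ E]
  {T : ι → E → E} {lam : ι → ℝ} {J : Set E}

theorem exists_separated_words [Finite ι] (hT : ∀ i, IsSimilarity (lam i) (T i))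
    (hlam : ∀ i, 0 < lam i ∧ lam i < 1) (hJ : Bornology.IsBounded J)
    (hcover : J ⊆ ⋃ i, T i '' J) {d : ℝ} (hd : 0 < d)
    (hsep : ∀ v : E, ‖v‖ = 1 → ∃ x ∈ J, ∃ y ∈ J, d ≤ |⟪v, x - y⟫_ℝ|) :
    ∃ ρ, 0 < ρ ∧ ρ < 1 ∧ ∀ v : E, ‖v‖ = 1 → ∃ w : Fin 2 → List ι,
      (∀ b, ρ ≤ wordRatio lam (w b)) ∧ ∀ b b', b ≠ b' →
        ∀ p ∈ wordMap T (w b) '' J, ∀ q ∈ wordMap T (w b') '' J, d / 2 ≤ |⟪v, p - q⟫_ℝ| := by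
  have : Nonempty (Ioo (0 : ℝ) 1) := ⟨⟨2⁻¹, by norm_num, by norm_num⟩⟩
  obtain ⟨⟨c, hc0, hc1⟩, hc⟩ := Finite.exists_ge fun i => (⟨lam i, hlam i⟩ : Ioo (0 : ℝ) 1)
  obtain ⟨⟨q, hq0, hq1⟩, hq⟩ := Finite.exists_le fun i => (⟨lam i, hlam i⟩ : Ioo (0 : ℝ) 1)
  obtain ⟨n, hn⟩ := exists_pow_lt_of_lt_one (show 0 < d / (4 * (diam J + 1)) by positivity) hq1
  rw [lt_div_iff₀ (by positivity)] at hn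
  refine ⟨c ^ (n + 1), pow_pos hc0 _, pow_lt_one₀ hc0.le hc1 n.succ_ne_zero, fun v hv => ?_⟩
  have hsmall : ∀ w : List ι, w.length = n + 1 → ∀ p ∈ wordMap T w '' J,
      ∀ p' ∈ wordMap T w '' J, |⟪v, p - p'⟫_ℝ| ≤ d / 4 := by
    intro w hw p hp p' hp'
    have hR : 0 ≤ wordRatio lam w :=
      (pow_nonneg hc0.le _).trans (pow_length_le_wordRatio hc0.le hc w)
    have hRq : wordRatio lam w ≤ q ^ n :=
      (wordRatio_le_pow_length (fun i => (hlam i).1.le) hq w).trans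
        (hw ▸ pow_le_pow_of_le_one hq0.le hq1.le n.le_succ)
    calc |⟪v, p - p'⟫_ℝ| ≤ dist p p' := by
          simpa [hv, dist_eq_norm] using abs_real_inner_le_norm v (p - p')
      _ ≤ |wordRatio lam w| * diam J := (IsSimilarity.wordMap hT w).dist_le_mul_diam hJ hp hp'
      _ ≤ q ^ n * (diam J + 1) := by rw [abs_of_nonneg hR]; gcongr; linarith
      _ ≤ d / 4 := by linarith
  obtain ⟨x, hx, y, hy, hxy⟩ := hsep v hv
  set X : Fin 2 → E := ![x, y]
  have hX : ∀ b b', b ≠ b' → d ≤ |⟪v, X b - X b'⟫_ℝ| := by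
    have hyx : d ≤ |⟪v, y - x⟫_ℝ| := by rwa [← neg_sub, inner_neg_right, abs_neg]
    intro b b' hbb'
    fin_cases b <;> fin_cases b' <;> first | exact absurd rfl hbb' | exact hxy | exact hyx
  choose w hw hXw using fun b => exists_length_eq_mem_wordMap_image hcover (n + 1)
    (show X b ∈ J by fin_cases b <;> simpa [X])
  refine ⟨w, fun b => hw b ▸ pow_length_le_wordRatio hc0.le hc (w b),
    fun b b' hbb' p hp p' hp' => ?_⟩
  have hsplit : ⟪v, X b - X b'⟫_ℝ = ⟪v, X b - p⟫_ℝ + ⟪v, p - p'⟫_ℝ + ⟪v, p' - X b'⟫_ℝ := by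
    simp only [inner_sub_right]; ring
  have := (hX b b' hbb').trans (hsplit ▸ abs_add_three _ _ _)
  linarith [hsmall (w b) (hw b) _ (hXw b) p hp, hsmall (w b') (hw b') p' hp' _ (hXw b')]

theorem le_dimH_image_inner_of_separated_words (hT : ∀ i, IsSimilarity (lam i) (T i))
    (hJc : IsCompact J) (hJne : J.Nonempty) (hJ : ∀ i, T i '' J ⊆ J) {ρ σ : ℝ} (hρ0 : 0 < ρ)
    (hρ1 : ρ < 1) (hσ : 0 < σ)
    (hw : ∀ v : E, ‖v‖ = 1 → ∃ w : Fin 2 → List ι, (∀ b, ρ ≤ wordRatio lam (w b)) ∧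
      ∀ b b', b ≠ b' → ∀ p ∈ wordMap T (w b) '' J, ∀ q ∈ wordMap T (w b') '' J,
        σ ≤ |⟪v, p - q⟫_ℝ|)
    {u : E} (hu : ‖u‖ = 1) :
    ENNReal.ofReal (Real.log 2 / Real.log ρ⁻¹) ≤ dimH ((⟪u, ·⟫_ℝ) '' J) := by
  -- Seen from `u`, the cylinder of `w` is `J` projected in the direction `v w`, scaled by the
  -- ratio of `w`; so the children of `w` are chosen separated in the direction `v w`.
  choose v hv_norm hv using fun w => (IsSimilarity.wordMap hT w).inner_sub u
  choose c hc_ratio hc_sep using fun w => hw (v w) ((hv_norm w).trans hu)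
  set K : (ℕ → Fin 2) → ℕ → Set E := fun ω k => wordMap T (treeWord c ω k) '' J
  have hratio := pow_le_wordRatio_treeWord hρ0.le hc_ratio
  have hsep : ∀ ω ω' m, (∀ k < m, ω k = ω' k) → ω m ≠ ω' m →
      ∀ p ∈ K ω (m + 1), ∀ q ∈ K ω' (m + 1), σ * ρ ^ m ≤ |⟪u, p - q⟫_ℝ| := by
    intro ω ω' m hlt hm p hp q hq
    simp only [K, image_wordMap_treeWord_succ] at hp hq
    rw [treeWord_congr hlt] at hp
    obtain ⟨p', hp', rfl⟩ := hp
    obtain ⟨q', hq', rfl⟩ := hq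
    have hR := (pow_nonneg hρ0.le m).trans (hratio ω' m)
    rw [hv, abs_mul, abs_of_nonneg hR, mul_comm σ]
    exact mul_le_mul (hratio ω' m) (hc_sep _ _ _ hm p' hp' q' hq') hσ.le hR
  have hK_compact : ∀ ω k, IsCompact (K ω k) := fun ω k =>
    hJc.image (IsSimilarity.wordMap hT _).lipschitzWith.continuous
  have hx : ∀ ω, (⋂ k, K ω k).Nonempty := fun ω =>
    IsCompact.nonempty_iInter_of_sequence_nonempty_isCompact_isClosed (K ω)
      (fun k => by
        simpa only [K, image_wordMap_treeWord_succ] using image_mono (wordMap_image_subset hJ _))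
      (fun k => hJne.image _) (hK_compact ω 0) (fun k => (hK_compact ω k).isClosed)
  choose x hx using hx
  calc ENNReal.ofReal (Real.log 2 / Real.log ρ⁻¹) ≤ dimH (range fun ω => ⟪u, x ω⟫_ℝ) :=
        le_dimH_range_of_le_dist hρ0 hρ1 hσ fun ω ω' m hlt hm => by
          rw [Real.dist_eq, ← inner_sub_right]
          exact hsep ω ω' m hlt hm _ (mem_iInter.1 (hx ω) _) _ (mem_iInter.1 (hx ω') _)
    _ ≤ dimH ((⟪u, ·⟫_ℝ) '' J) :=
        dimH_mono (range_subset_iff.2 fun ω => mem_image_of_mem _ (by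
          simpa [K, treeWord, wordMap] using mem_iInter.1 (hx ω) 0))

theorem exists_pos_forall_le_dimH_image_inner [Finite ι] (hE : finrank ℝ E = 2)
    (hT : ∀ i, IsSimilarity (lam i) (T i)) (hlam : ∀ i, 0 < lam i ∧ lam i < 1)
    (hJc : IsCompact J) (hself : J = ⋃ i, T i '' J) (hJ : ¬Collinear ℝ J) :
    ∃ α > 0, ∀ u : E, ‖u‖ = 1 → ENNReal.ofReal α ≤ dimH ((⟪u, ·⟫_ℝ) '' J) := by
  obtain ⟨d, hd, hsep⟩ := exists_pos_le_abs_inner_sub_of_not_collinear hE hJ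
  obtain ⟨ρ, hρ0, hρ1, hw⟩ :=
    exists_separated_words hT hlam hJc.isBounded hself.subset hd hsep
  have hJne : J.Nonempty := nonempty_iff_ne_empty.2 fun h => hJ (h ▸ collinear_empty ℝ E)
  refine ⟨Real.log 2 / Real.log ρ⁻¹,
    div_pos (Real.log_pos one_lt_two) (Real.log_pos ((one_lt_inv₀ hρ0).2 hρ1)), fun u hu => ?_⟩
  exact le_dimH_image_inner_of_separated_words hT hJc hJne
    (fun i => (subset_iUnion (fun j => T j '' J) i).trans hself.symm.subset) hρ0 hρ1
    (half_pos hd) hw hu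

end SelfSimilar

theorem stmt18_general (s : ℕ) (T : Fin s → ℂ → ℂ) (lam : Fin s → ℝ)
    (rot : Fin s → ℂ ≃ₗᵢ[ℝ] ℂ) (z : Fin s → ℂ)
    (hlam : ∀ i, 0 < lam i ∧ lam i < 1)
    (hT : ∀ i x, T i x = lam i • (rot i x) + z i)
    (J : Set ℂ) (hJc : IsCompact J)
    (hself : J = ⋃ i, T i '' J)
    (hline : ¬ Collinear ℝ J) :
    ∃ α : ℝ, 0 < α ∧ ∀ θ ∈ Icc (0 : ℝ) (2 * Real.pi),
      ENNReal.ofReal α ≤ dimH (linproj θ '' J) := by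
  have hsim : ∀ i, IsSimilarity (lam i) (T i) := fun i =>
    ⟨rot i, fun x y => by rw [hT, hT, map_sub, smul_sub]; abel⟩
  obtain ⟨α, hα, hdim⟩ := exists_pos_forall_le_dimH_image_inner Complex.finrank_real_complex
    hsim hlam hJc hself hline
  refine ⟨α, hα, fun θ _ => ?_⟩
  have hproj : linproj θ = (⟪Complex.exp (θ * Complex.I), ·⟫_ℝ) := by
    ext x
    simp [linproj, Complex.inner, Complex.exp_ofReal_mul_I_re, Complex.exp_ofReal_mul_I_im]
  rw [hproj]
  exact hdim _ (Complex.norm_exp_ofReal_mul_I θ)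

/-- A self-similar set not contained in a line has all of its orthogonal projections
of Hausdorff dimension at least `α`, for some `α > 0`. -/
theorem stmt18 (s : ℕ) (T : Fin s → ℂ → ℂ) (lam : Fin s → ℝ)
    (rot : Fin s → ℂ ≃ₗᵢ[ℝ] ℂ) (z : Fin s → ℂ)
    (hlam : ∀ i, 0 < lam i ∧ lam i < 1)
    (hT : ∀ i x, T i x = lam i • (rot i x) + z i)
    (J : Set ℂ) (hJc : IsCompact J) (hJne : J.Nonempty)
    (hself : J = ⋃ i, T i '' J)
    (hline : ¬ Collinear ℝ J) :
    ∃ α : ℝ, 0 < α ∧ ∀ θ ∈ Icc (0 : ℝ) (2 * Real.pi),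
      ENNReal.ofReal α ≤ dimH (linproj θ '' J) :=
  stmt18_general s T lam rot z hlam hT J hJc hself hline
end
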